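/- Let A ∈ ℝ^{n×n}, ε > 0, 1 ≤ r < n, 1 ≤ ℓ ≤ n − r. Let Ū ∈ St(r,n) satisfy the equilibrium condition (I_n − ŪŪᵀ)·A·Ū = 0, and let Ū_⊥ ∈ St(n−r,n) satisfy ŪᵀŪ_⊥ = 0 and Ū·Ūᵀ + Ū_⊥·Ū_⊥ᵀ = I_n. Suppose u : ℝ → ℝ^{(n−r)×ℓ} is differentiable and satisfies the reduced Oja flow ε·(d/dt)u(t) = (I_{n−r} − u(t)u(t)ᵀ)·(Ū_⊥ᵀ·A·Ū_⊥)·u(t) for all t. Then the block matrix U(t) := [Ū, Ū_⊥·u(t)] ∈ ℝ^{n×(r+ℓ)} satisfies the full Oja flow ε·(d/dt)U(t) = (I_n − U(t)U(t)ᵀ)·A·U(t) for all t. -/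

import Mathlib

open Matrix

/-! Since `Ub Ubᵀ + Up Upᵀ = 1` and `Ubᵀ Up = 0`, the equilibrium condition (`A` maps the span
of `Ub` into itself) gives `Upᵀ A Ub = 0`. Hence the block `Ub` of `U = [Ub, Up u]` feels no
force, while the force `(Up Upᵀ - Up u uᵀ Upᵀ) A Up u` on the second block is `Up` times the
reduced Oja field of `u` for the compression `Upᵀ A Up`. -/

namespace Matrix

variable {m n k k₁ k₂ : Type*} [Fintype n]

section Derivatives

variable {u : ℝ → Matrix n k ℝ} {u' : Matrix n k ℝ} {t : ℝ}

theorem hasDerivAt_mul_apply (M : Matrix m n ℝ)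
    (hu : ∀ i j, HasDerivAt (fun s => u s i j) (u' i j) t) (i : m) (j : k) :
    HasDerivAt (fun s => (M * u s) i j) ((M * u') i j) t := by
  simp only [mul_apply]
  exact HasDerivAt.fun_sum fun l _ => (hu l j).const_mul (M i l)

theorem hasDerivAt_fromCols_apply {a : ℝ → Matrix m k₁ ℝ} {a' : Matrix m k₁ ℝ}
    {b : ℝ → Matrix m k₂ ℝ} {b' : Matrix m k₂ ℝ}
    (ha : ∀ i j, HasDerivAt (fun s => a s i j) (a' i j) t)
    (hb : ∀ i j, HasDerivAt (fun s => b s i j) (b' i j) t) (i : m) :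
    ∀ j, HasDerivAt (fun s => fromCols (a s) (b s) i j) (fromCols a' b' i j) t
  | .inl j => ha i j
  | .inr j => hb i j

end Derivatives

theorem smul_fromCols {R α : Type*} [SMul R α] (c : R) (X : Matrix m k₁ α)
    (Y : Matrix m k₂ α) : c • fromCols X Y = fromCols (c • X) (c • Y) := by
  ext i (j | j) <;> rfl

variable {R : Type*} [CommRing R]

def ojaField [DecidableEq n] [Fintype k] (A : Matrix n n R) (U : Matrix n k R) :
    Matrix n k R :=
  (1 - U * Uᵀ) * A * U

variable [Fintype k₁] [Fintype k₂]

theorem ojaField_fromCols [DecidableEq n] (A : Matrix n n R) (X : Matrix n k₁ R)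
    (Y : Matrix n k₂ R) :
    ojaField A (fromCols X Y) =
      fromCols ((1 - X * Xᵀ - Y * Yᵀ) * A * X) ((1 - X * Xᵀ - Y * Yᵀ) * A * Y) := by
  rw [ojaField, transpose_fromCols, fromCols_mul_fromRows, mul_fromCols, sub_add_eq_sub_sub]

theorem mul_ojaField_compression [Fintype m] [DecidableEq m] [Fintype k] (A : Matrix n n R)
    (V : Matrix n m R) (u : Matrix m k R) :
    V * ojaField (Vᵀ * A * V) u = (V * Vᵀ - V * u * (V * u)ᵀ) * A * (V * u) := by
  simp only [ojaField, transpose_mul, Matrix.mul_sub, Matrix.sub_mul, Matrix.one_mul,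
    Matrix.mul_assoc]

theorem transpose_mul_mul_eq_zero_of_equilibrium [DecidableEq n] [Fintype m]
    {A : Matrix n n R} {Ub : Matrix n k₁ R} {V : Matrix n m R}
    (hUb : (1 - Ub * Ubᵀ) * A * Ub = 0)
    (horth : Ubᵀ * V = 0) : Vᵀ * A * Ub = 0 := by
  have hV : Vᵀ * (1 - Ub * Ubᵀ) = Vᵀ := by
    rw [Matrix.mul_sub, Matrix.mul_one, ← Matrix.mul_assoc, ← transpose_transpose Ub,
      ← transpose_mul, horth, transpose_transpose, transpose_zero, Matrix.zero_mul, sub_zero]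
  rw [← hV, Matrix.mul_assoc, Matrix.mul_assoc, ← Matrix.mul_assoc _ A, hUb, Matrix.mul_zero]

end Matrix

theorem subspace_expansion_oja_flow
    (n r l : ℕ)
    (A : Matrix (Fin n) (Fin n) ℝ) (ε : ℝ)
    (Ub : Matrix (Fin n) (Fin r) ℝ)
    (hUbeq : (1 - Ub * Ubᵀ) * A * Ub = 0)
    (Up : Matrix (Fin n) (Fin (n - r)) ℝ)
    (horth : Ubᵀ * Up = 0)
    (hcompl : Ub * Ubᵀ + Up * Upᵀ = 1)
    (u u' : ℝ → Matrix (Fin (n - r)) (Fin l) ℝ)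
    (hderiv : ∀ t, ∀ i j, HasDerivAt (fun s => u s i j) (u' t i j) t)
    (hode : ∀ t, ε • u' t = (1 - u t * (u t)ᵀ) * (Upᵀ * A * Up) * u t)
    (U : ℝ → Matrix (Fin n) (Fin r ⊕ Fin l) ℝ)
    (hU : ∀ t, U t = Matrix.fromCols Ub (Up * u t)) :
    ∃ U' : ℝ → Matrix (Fin n) (Fin r ⊕ Fin l) ℝ,
      (∀ t, ∀ i j, HasDerivAt (fun s => U s i j) (U' t i j) t) ∧
      (∀ t, ε • U' t = (1 - U t * (U t)ᵀ) * A * U t) := by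
  refine ⟨fun t => fromCols 0 (Up * u' t), fun t i => ?_, fun t => ?_⟩
  · simp only [hU]
    exact hasDerivAt_fromCols_apply (a := fun _ => Ub) (a' := 0)
      (fun _ _ => hasDerivAt_const _ _) (hasDerivAt_mul_apply Up (hderiv t)) i
  · have hproj : 1 - Ub * Ubᵀ = Up * Upᵀ := sub_eq_of_eq_add' hcompl.symm
    have hcross : Upᵀ * A * Ub = 0 :=
      transpose_mul_mul_eq_zero_of_equilibrium hUbeq horth
    change _ = ojaField A (U t)
    rw [hU, ojaField_fromCols, hproj, smul_fromCols, smul_zero, ← Matrix.mul_smul, hode t,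
      ← ojaField, mul_ojaField_compression]
    congr 1
    simp only [transpose_mul, Matrix.sub_mul, Matrix.mul_assoc, hcross, Matrix.mul_zero,
      sub_zero]
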